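/- Let G be a strongly connected digraph with start vertex s, and let e=(u,v) be a strong bridge that is a bridge in G_s but not in G_s^R. Then the number of strongly connected components of G\e equals the number of vertices w ∈ D(v) such that h(w) ∉ D(v), plus one, where h(w) is the parent of w in the loop nesting tree H of G_s. -/

import Mathlib

/-!
Deleting the bridge `(u,v)` of `G_s` makes exactly `D(v)` unreachable from `s`, while every vertex
still reaches `s` because `(v,u)` is not a bridge of `G_s^R`; so the vertices outside `D(v)` form a
single strongly connected component of `G \ (u,v)`. The set `D(v)` lies in the DFS subtree of `v`
and `u` is the tree parent of `v`, so the loop of `h(w)` survives the deletion whenever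
`h(w) ∈ D(v)`: each `w ∈ D(v)` is strongly connected to its nearest loop-nesting ancestor `w'` with
`h(w') ∉ D(v)`. Conversely, a component inside `D(v)` lies in the loop-nesting subtree of its vertex
of least preorder number, and since `D(v)` is convex along tree paths that subtree contains only one
such `w'`.
-/

namespace StrongConn

variable {V : Type*}

/-- `p` is a walk in the digraph `G` from `u` to `v`, recorded as the list of visited vertices. -/
def IsWalk (G : V → V → Prop) (u v : V) (p : List V) : Prop :=
  p.Chain' G ∧ p.head? = some u ∧ p.getLast? = some v

/-- The directed edge `(a,b)` occurs on the walk `p`. -/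
def EdgeOn (a b : V) (p : List V) : Prop := (a, b) ∈ p.zip p.tail

/-- `v` is reachable from `u` in `G`. -/
def Reach (G : V → V → Prop) (u v : V) : Prop := ∃ p, IsWalk G u v p

/-- `u` and `v` are strongly connected in `G`. -/
def SConn (G : V → V → Prop) (u v : V) : Prop := Reach G u v ∧ Reach G v u

def StronglyConnected (G : V → V → Prop) : Prop := ∀ u v, Reach G u v

/-- `G` with the edge `(a,b)` deleted. -/
def DelEdge (G : V → V → Prop) (a b : V) : V → V → Prop :=
  fun x y => G x y ∧ ¬(x = a ∧ y = b)

/-- `G` with the vertex `u` (and all incident edges) deleted. -/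
def DelVertex (G : V → V → Prop) (u : V) : V → V → Prop :=
  fun x y => G x y ∧ x ≠ u ∧ y ≠ u

/-- `C` is a strongly connected component of `G`. -/
def IsSCC (G : V → V → Prop) (C : Set V) : Prop :=
  C.Nonempty ∧ (∀ x ∈ C, ∀ y ∈ C, SConn G x y) ∧ ∀ x ∈ C, ∀ y, SConn G x y → y ∈ C

/-- `(a,b)` is a strong bridge: an edge whose removal increases the number of
strongly connected components, i.e. it separates some strongly connected pair. -/
def IsStrongBridge (G : V → V → Prop) (a b : V) : Prop :=
  G a b ∧ ∃ x y, SConn G x y ∧ ¬ SConn (DelEdge G a b) x y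

/-- `u` is a strong articulation point: removing it increases the number of strongly
connected components, i.e. it separates some strongly connected pair of other vertices. -/
def IsStrongArticulationPoint (G : V → V → Prop) (u : V) : Prop :=
  ∃ x y, x ≠ u ∧ y ≠ u ∧ SConn G x y ∧ ¬ SConn (DelVertex G u) x y

/-- The reverse digraph. -/
def Rev (G : V → V → Prop) : V → V → Prop := fun x y => G y x

/-- `u` dominates `v` in the flow graph `G_s`; equivalently, `u` is an ancestor of `v`
(and `v` a descendant of `u`) in the dominator tree of `G_s`. -/
def Dom (G : V → V → Prop) (s u v : V) : Prop :=
  ∀ p, IsWalk G s v p → u ∈ p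

/-- `u` is the immediate dominator of `v` in `G_s` (the parent of `v` in the dominator tree). -/
def Idom (G : V → V → Prop) (s u v : V) : Prop :=
  u ≠ v ∧ Dom G s u v ∧ ∀ w, w ≠ v → Dom G s w v → Dom G s w u

/-- Edge `(a,b)` is a bridge of the flow graph `G_s`: every walk from `s` to `b` uses it. -/
def IsBridge (G : V → V → Prop) (s a b : V) : Prop :=
  G a b ∧ ∀ p, IsWalk G s b p → EdgeOn a b p

/-- `r` is the head of some bridge of `G_s`, i.e. a non-`s` root in the bridge
decomposition of the dominator tree. -/
def IsBridgeHead (G : V → V → Prop) (s r : V) : Prop :=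
  ∃ a, IsBridge G s a r

/-- `r` is the root of the tree containing `x` in the bridge decomposition of the
dominator tree of `G_s`: `r` dominates `x`, `r` is `s` or a bridge head, and every
bridge head dominating `x` dominates `r`. -/
def IsBDRoot (G : V → V → Prop) (s r x : V) : Prop :=
  Dom G s r x ∧ (r = s ∨ IsBridgeHead G s r) ∧
    ∀ z, Dom G s z x → IsBridgeHead G s z → Dom G s z r

/-- A depth-first search tree of `G` rooted at `s`, given by a parent function and a
preorder numbering. -/
structure DFSTree (G : V → V → Prop) (s : V) where
  parent : V → V
  pre : V → ℕ
  parent_root : parent s = s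
  parent_edge : ∀ v, v ≠ s → G (parent v) v
  root_reach : ∀ v, ∃ n, parent^[n] v = s
  pre_inj : Function.Injective pre
  pre_parent : ∀ v, v ≠ s → pre (parent v) < pre v
  /-- Descendants of a vertex form a contiguous interval in preorder. -/
  interval : ∀ u v w, (∃ n, parent^[n] w = u) → pre u ≤ pre v → pre v ≤ pre w →
      ∃ n, parent^[n] v = u
  /-- The defining property of depth-first search trees: every edge going forward
  in preorder goes to a descendant. -/
  dfs_edge : ∀ u v, G u v → pre u < pre v → ∃ n, parent^[n] v = u

/-- `u` is an ancestor of `v` in the tree `T` (every vertex is an ancestor of itself). -/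
def DFSTree.Anc {G : V → V → Prop} {s : V} (T : DFSTree G s) (u v : V) : Prop :=
  ∃ n, T.parent^[n] v = u

/-- `x ∈ loop(u)` with respect to the tree-ancestor relation `tanc`: `x` is a descendant
of `u` and there is a walk from `x` to `u` using only descendants of `u`. -/
def InLoop (G : V → V → Prop) (tanc : V → V → Prop) (u x : V) : Prop :=
  tanc u x ∧ ∃ p, IsWalk G x u p ∧ ∀ y ∈ p, tanc u y

/-- `hp` is the parent function of the loop nesting tree of `G_s` with respect to the
DFS-tree ancestor relation `tanc`: `hp x` is the nearest proper ancestor `u` of `x`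
in the DFS tree with `x ∈ loop(u)`. -/
def IsLoopParent (G : V → V → Prop) (s : V) (tanc : V → V → Prop) (hp : V → V) : Prop :=
  hp s = s ∧ ∀ x, x ≠ s →
    (tanc (hp x) x ∧ hp x ≠ x ∧ InLoop G tanc (hp x) x ∧
      ∀ u, tanc u x → u ≠ x → InLoop G tanc u x → tanc u (hp x))

/-- `u` is an ancestor of `v` in the loop nesting tree with parent function `hp`. -/
def HAnc (hp : V → V) (u v : V) : Prop := ∃ n, hp^[n] v = u

/-- `w` is the nearest common ancestor of `x` and `y` in the loop nesting tree
with parent function `hp`. -/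
def HNca (hp : V → V) (x y w : V) : Prop :=
  HAnc hp w x ∧ HAnc hp w y ∧ ∀ z, HAnc hp z x → HAnc hp z y → HAnc hp z w

/-- `u` is a nontrivial dominator of `G_s`: `u ≠ s` and `u` is not a leaf of the
dominator tree (it properly dominates some vertex). -/
def NontrivialDom (G : V → V → Prop) (s u : V) : Prop :=
  u ≠ s ∧ ∃ w, w ≠ u ∧ Dom G s u w

/-- `a` and `b` are siblings in the dominator tree of `G_s`. -/
def SiblingInD (G : V → V → Prop) (s a b : V) : Prop :=
  a ≠ b ∧ ∃ w, Idom G s w a ∧ Idom G s w b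

/-- Given the bridge-decomposition root function `r` and loop-nesting parent `hp`,
`z` is a boundary vertex. -/
def Boundary (s : V) (r hp : V → V) (z : V) : Prop := z = s ∨ r (hp z) ≠ r z

/-- `z` is the nearest boundary ancestor of `x` in the loop nesting tree. -/
def IsNearestBoundary (s : V) (r hp : V → V) (x z : V) : Prop :=
  HAnc hp z x ∧ Boundary s r hp z ∧
    ∀ z', HAnc hp z' x → Boundary s r hp z' → HAnc hp z' z

/-- `x` and `y` are 2-edge-connected: no single edge deletion leaves them in
different strongly connected components. -/
def TwoEdgeConnected (G : V → V → Prop) (x y : V) : Prop :=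
  ∀ a b, G a b → SConn (DelEdge G a b) x y

open Relation List

def Induced (G : V → V → Prop) (P : V → Prop) : V → V → Prop :=
  fun a b => G a b ∧ P a ∧ P b

theorem reflTransGen_induced {r : V → V → Prop} {P : V → Prop} {a b : V}
    (hP : ∀ z, ReflTransGen r a z → ReflTransGen r z b → P z) (h : ReflTransGen r a b) :
    ReflTransGen (Induced r P) a b := by
  induction h with
  | refl => exact .refl
  | @tail c d hac hcd ih =>
    exact (ih fun z haz hzc => hP z haz (hzc.tail hcd)).tail
      ⟨hcd, hP c hac (.single hcd), hP d (hac.tail hcd) .refl⟩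

section Walks

variable {G : V → V → Prop} {x y a b : V} {p : List V}

theorem reach_iff_reflTransGen : Reach G x y ↔ ReflTransGen G x y := by
  constructor
  · rintro ⟨_ | ⟨x', l⟩, hc, hh, hl⟩
    · simp at hh
    · obtain rfl : x' = x := by simpa using hh
      rw [getLast?_eq_some_getLast (cons_ne_nil _ _), Option.some_inj] at hl
      exact relationReflTransGen_of_exists_isChain_cons l hc hl
  · intro h
    obtain ⟨l, hc, hl⟩ := exists_isChain_cons_of_relationReflTransGen h
    exact ⟨x :: l, hc, rfl, by rw [getLast?_eq_some_getLast (cons_ne_nil _ _), hl]⟩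

theorem sconn_iff_reflTransGen : SConn G x y ↔ ReflTransGen G x y ∧ ReflTransGen G y x := by
  simp only [SConn, reach_iff_reflTransGen]

theorem exists_isWalk_forall_mem_iff {P : V → Prop} :
    (∃ p, IsWalk G x y p ∧ ∀ z ∈ p, P z) ↔ P x ∧ ReflTransGen (Induced G P) x y := by
  constructor
  · rintro ⟨p, ⟨hc, hh, hl⟩, hP⟩
    refine ⟨hP x (mem_of_head? hh), reach_iff_reflTransGen.1 ⟨p, ?_, hh, hl⟩⟩
    exact hc.imp_of_mem_imp fun a b ha hb hab => ⟨hab, hP a ha, hP b hb⟩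
  · rintro ⟨hx, h⟩
    obtain ⟨p, hc, hh, hl⟩ := reach_iff_reflTransGen.2 h
    refine ⟨p, ⟨hc.imp fun _ _ hab => hab.1, hh, hl⟩, ?_⟩
    refine hc.induction P p (fun _ _ hab _ => hab.2.2) fun _ => ?_
    obtain ⟨l, rfl⟩ := head?_eq_some_iff.1 hh
    exact hx

theorem isChain_delEdge_iff : ∀ {p : List V},
    IsChain (DelEdge G a b) p ↔ IsChain G p ∧ ¬ EdgeOn a b p
  | [] | [_] => by simp [EdgeOn]
  | x :: y :: l => by
    simp only [isChain_cons_cons, isChain_delEdge_iff (p := y :: l), EdgeOn, DelEdge,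
      tail_cons, zip_cons_cons, mem_cons, Prod.mk.injEq]
    tauto

theorem isWalk_delEdge_iff : IsWalk (DelEdge G a b) x y p ↔ IsWalk G x y p ∧ ¬ EdgeOn a b p :=
  ⟨fun ⟨hc, hh, hl⟩ => ⟨⟨(isChain_delEdge_iff.1 hc).1, hh, hl⟩, (isChain_delEdge_iff.1 hc).2⟩,
    fun ⟨⟨hc, hh, hl⟩, he⟩ => ⟨isChain_delEdge_iff.2 ⟨hc, he⟩, hh, hl⟩⟩

theorem isBridge_iff {s : V} :
    IsBridge G s a b ↔ G a b ∧ ¬ ReflTransGen (DelEdge G a b) s b := by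
  simp only [IsBridge, ← reach_iff_reflTransGen, Reach, isWalk_delEdge_iff, not_exists, not_and,
    not_not]

theorem dom_iff_not_reflTransGen_induced {s v w : V} :
    Dom G s v w ↔ ¬ (s ≠ v ∧ ReflTransGen (Induced G (· ≠ v)) s w) :=
  (by simp [Dom] : Dom G s v w ↔ ¬ ∃ p, IsWalk G s w p ∧ ∀ z ∈ p, z ≠ v).trans
    (not_congr exists_isWalk_forall_mem_iff)

theorem inLoop_iff {tanc : V → V → Prop} :
    InLoop G tanc a x ↔ tanc a x ∧ ReflTransGen (Induced G (tanc a)) x a := by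
  simp only [InLoop, exists_isWalk_forall_mem_iff, ← and_assoc, and_self]

theorem SConn.refl (G : V → V → Prop) (x : V) : SConn G x x :=
  sconn_iff_reflTransGen.2 ⟨.refl, .refl⟩

theorem SConn.symm (h : SConn G x y) : SConn G y x := ⟨h.2, h.1⟩

theorem SConn.trans {z : V} (hxy : SConn G x y) (hyz : SConn G y z) : SConn G x z := by
  rw [sconn_iff_reflTransGen] at *
  exact ⟨hxy.1.trans hyz.1, hyz.2.trans hxy.2⟩

end Walks

section Components

variable {H : V → V → Prop} {C : Set V} {x y : V}

theorem isSCC_setOf_sconn (H : V → V → Prop) (x : V) : IsSCC H {y | SConn H x y} :=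
  ⟨⟨x, .refl H x⟩, fun _ ha _ hb => ha.symm.trans hb, fun _ ha _ hb => ha.trans hb⟩

theorem IsSCC.eq_setOf_sconn (hC : IsSCC H C) (hx : x ∈ C) : C = {y | SConn H x y} :=
  Set.ext fun y => ⟨hC.2.1 x hx y, hC.2.2 x hx y⟩

theorem setOf_sconn_eq (h : SConn H x y) : {z | SConn H x z} = {z | SConn H y z} :=
  Set.ext fun _ => ⟨h.symm.trans, h.trans⟩

theorem ncard_setOf_isSCC [Finite V] {O B : Set V} (hO : IsSCC H O) (hBO : ∀ w ∈ B, w ∉ O)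
    (hcover : ∀ x ∉ O, ∃ w ∈ B, SConn H x w)
    (hsep : ∀ w₁ ∈ B, ∀ w₂ ∈ B, SConn H w₁ w₂ → w₁ = w₂) :
    {C | IsSCC H C}.ncard = B.ncard + 1 := by
  have hsccs : {C | IsSCC H C} = insert O ((fun w => {y | SConn H w y}) '' B) := by
    ext C
    refine ⟨fun hC => ?_, ?_⟩
    · obtain ⟨x, hx⟩ := hC.1
      by_cases hxO : x ∈ O
      · exact .inl ((hC.eq_setOf_sconn hx).trans (hO.eq_setOf_sconn hxO).symm)
      · obtain ⟨w, hwB, hxw⟩ := hcover x hxO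
        exact .inr ⟨w, hwB, ((hC.eq_setOf_sconn hx).trans (setOf_sconn_eq hxw)).symm⟩
    · rintro (rfl | ⟨w, -, rfl⟩)
      exacts [hO, isSCC_setOf_sconn H w]
  have hnotMem : O ∉ (fun w => {y | SConn H w y}) '' B := by
    rintro ⟨w, hwB, hwO⟩
    exact hBO w hwB (hwO ▸ SConn.refl H w)
  have hinj : Set.InjOn (fun w => {y | SConn H w y}) B := fun w₁ h₁ w₂ h₂ heq =>
    hsep w₁ h₁ w₂ h₂ ((Set.ext_iff.1 heq w₂).2 (SConn.refl H w₂))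
  rw [hsccs, Set.ncard_insert_of_notMem hnotMem (Set.toFinite _), hinj.ncard_image]

end Components

section Iterate

variable {f : V → V} {a b c s : V}

theorem HAnc.refl (f : V → V) (a : V) : HAnc f a a := ⟨0, rfl⟩

theorem HAnc.trans (hab : HAnc f a b) (hbc : HAnc f b c) : HAnc f a c := by
  obtain ⟨m, hm⟩ := hab
  obtain ⟨n, hn⟩ := hbc
  exact ⟨m + n, by rw [Function.iterate_add_apply, hn, hm]⟩

theorem HAnc.of_apply (h : HAnc f a (f b)) : HAnc f a b :=
  let ⟨n, hn⟩ := h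
  ⟨n + 1, hn⟩

theorem induction_of_forall_hAnc (hf : ∀ x, HAnc f s x) {P : V → Prop} (root : P s)
    (step : ∀ x, x ≠ s → P (f x) → P x) (x : V) : P x := by
  obtain ⟨n, hn⟩ := hf x
  induction n generalizing x with
  | zero =>
    obtain rfl : x = s := hn
    exact root
  | succ n ih =>
    by_cases hxs : x = s
    · exact hxs ▸ root
    · exact step x hxs (ih _ hn)

theorem forall_hAnc_of_lt (r : V → ℕ) (hr : ∀ x, x ≠ s → r (f x) < r x) (x : V) :
    HAnc f s x := by
  induction hx : r x using Nat.strong_induction_on generalizing x with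
  | _ n ih =>
    by_cases hxs : x = s
    · exact hxs ▸ HAnc.refl f s
    · exact (ih _ (hx ▸ hr x hxs) (f x) rfl).of_apply

end Iterate

namespace DFSTree

variable {G : V → V → Prop} {s : V} (T : DFSTree G s) {a b m w x y : V}

theorem pre_parent_le (x : V) : T.pre (T.parent x) ≤ T.pre x := by
  by_cases hx : x = s
  · rw [hx, T.parent_root]
  · exact (T.pre_parent x hx).le

theorem pre_le_of_anc (h : T.Anc a b) : T.pre a ≤ T.pre b := by
  obtain ⟨n, rfl⟩ := h
  induction n with
  | zero => exact le_rfl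
  | succ n ih =>
    rw [Function.iterate_succ_apply']
    exact (T.pre_parent_le _).trans ih

theorem pre_lt_of_anc (h : T.Anc a b) (hne : a ≠ b) : T.pre a < T.pre b := by
  obtain ⟨_ | n, rfl⟩ := h
  · exact absurd rfl hne
  · have hbs : b ≠ s := by
      rintro rfl
      exact hne (Function.iterate_fixed T.parent_root _)
    exact (T.pre_le_of_anc ⟨n, rfl⟩).trans_lt (T.pre_parent b hbs)

theorem eq_root_of_anc_root (h : T.Anc a s) : a = s := by
  obtain ⟨n, hn⟩ := h
  rw [← hn, Function.iterate_fixed T.parent_root]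

-- Forward edges lead to descendants; any other edge stays in the preorder interval of the subtree.
theorem anc_of_reflTransGen_induced_pre (hx : T.Anc m x)
    (h : ReflTransGen (Induced G fun z => T.pre m ≤ T.pre z) x y) : T.Anc m y := by
  induction h with
  | refl => exact hx
  | @tail b c _ e ih =>
    rcases le_or_gt (T.pre c) (T.pre b) with hcb | hbc
    · exact T.interval m c b ih e.2.2 hcb
    · exact HAnc.trans ih (T.dfs_edge b c e.1 hbc)

theorem reflTransGen_induced_anc (h : T.Anc w x) : ReflTransGen (Induced G (T.Anc w)) w x := by
  obtain ⟨n, hn⟩ := h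
  induction n generalizing x with
  | zero => exact hn ▸ .refl
  | succ n ih =>
    by_cases hxs : x = s
    · subst hxs
      rw [Function.iterate_fixed T.parent_root] at hn
      exact hn ▸ .refl
    · exact (ih hn).tail ⟨T.parent_edge x hxs, ⟨n, hn⟩, ⟨n + 1, hn⟩⟩

end DFSTree

namespace IsLoopParent

variable {G : V → V → Prop} {s : V} {T : DFSTree G s} {hp : V → V} {c m w x : V}

theorem anc_apply (hlp : IsLoopParent G s T.Anc hp) (x : V) : T.Anc (hp x) x := by
  by_cases hxs : x = s
  · rw [hxs, hlp.1]
    exact HAnc.refl _ _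
  · exact (hlp.2 x hxs).1

theorem anc_of_hAnc (hlp : IsLoopParent G s T.Anc hp) (h : HAnc hp w x) : T.Anc w x := by
  obtain ⟨n, rfl⟩ := h
  induction n with
  | zero => exact HAnc.refl _ _
  | succ n ih =>
    rw [Function.iterate_succ_apply']
    exact HAnc.trans (hlp.anc_apply _) ih

theorem forall_hAnc_root (hlp : IsLoopParent G s T.Anc hp) : ∀ x, HAnc hp s x :=
  forall_hAnc_of_lt T.pre fun x hxs => T.pre_lt_of_anc (hlp.2 x hxs).1 (hlp.2 x hxs).2.1

theorem hAnc_of_reflTransGen (hlp : IsLoopParent G s T.Anc hp) (hmc : T.Anc m c)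
    (h : ReflTransGen (Induced G (T.Anc m)) c m) : HAnc hp m c := by
  revert hmc h
  refine induction_of_forall_hAnc (P := fun c => T.Anc m c →
    ReflTransGen (Induced G (T.Anc m)) c m → HAnc hp m c) hlp.forall_hAnc_root (fun hms _ => ?_)
    (fun c hcs ih hmc h => ?_) c
  · rw [T.eq_root_of_anc_root hms]
    exact HAnc.refl _ _
  by_cases hcm : c = m
  · exact hcm ▸ HAnc.refl _ _
  obtain ⟨hanc, -, -, hmax⟩ := hlp.2 c hcs
  have hm : T.Anc m (hp c) := hmax m hmc (Ne.symm hcm) (inLoop_iff.2 ⟨hmc, h⟩)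
  have hpath : ReflTransGen (Induced G (T.Anc m)) (hp c) c :=
    ReflTransGen.mono (fun _ _ e => ⟨e.1, HAnc.trans hm e.2.1, HAnc.trans hm e.2.2⟩) _ _
      (T.reflTransGen_induced_anc hanc)
  exact (ih hm (hpath.trans h)).of_apply

end IsLoopParent

namespace IsBridge

variable {G : V → V → Prop} {s u v a b w x z : V}

theorem not_reflTransGen (hbr : IsBridge G s u v) : ¬ ReflTransGen (DelEdge G u v) s v :=
  (isBridge_iff.1 hbr).2

theorem dom_iff (hbr : IsBridge G s u v) :
    Dom G s v w ↔ ¬ ReflTransGen (DelEdge G u v) s w := by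
  have hv : ∀ z, ReflTransGen (DelEdge G u v) s z → z ≠ v := fun z hz hzv =>
    hbr.not_reflTransGen (hzv ▸ hz)
  rw [dom_iff_not_reflTransGen_induced, not_iff_not]
  refine ⟨fun ⟨_, h⟩ => ReflTransGen.mono (fun _ _ e => ⟨e.1, fun he => e.2.2 he.2⟩) _ _ h,
    fun h => ⟨hv s .refl, ?_⟩⟩
  exact ReflTransGen.mono (fun _ _ e => ⟨e.1.1, e.2⟩) _ _
    (reflTransGen_induced (fun z hz _ => hv z hz) h)

theorem dom_self (hbr : IsBridge G s u v) : Dom G s v v :=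
  hbr.dom_iff.2 hbr.not_reflTransGen

theorem not_dom_start (hbr : IsBridge G s u v) : ¬ Dom G s v s :=
  hbr.dom_iff.not_left.2 .refl

theorem ne_start (hbr : IsBridge G s u v) : v ≠ s := fun h =>
  hbr.not_dom_start (h ▸ hbr.dom_self)

theorem dom_of_reflTransGen (hbr : IsBridge G s u v) (h : ReflTransGen (DelEdge G u v) a b)
    (hb : Dom G s v b) : Dom G s v a := by
  rw [hbr.dom_iff] at hb ⊢
  exact fun ha => hb (ha.trans h)

theorem anc_of_dom (hbr : IsBridge G s u v) (T : DFSTree G s) : Dom G s v w → T.Anc v w := by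
  refine induction_of_forall_hAnc (P := fun w => Dom G s v w → T.Anc v w) T.root_reach
    (fun h => absurd h hbr.not_dom_start) (fun x hxs ih hx => ?_) w
  by_cases hxv : x = v
  · exact hxv ▸ HAnc.refl _ _
  · exact HAnc.of_apply
      (ih (hbr.dom_of_reflTransGen (.single ⟨T.parent_edge x hxs, fun e => hxv e.2⟩) hx))

theorem parent_eq (hbr : IsBridge G s u v) (T : DFSTree G s) : T.parent v = u := by
  by_contra hne
  have hpar : ¬ Dom G s v (T.parent v) := fun h =>
    (T.pre_parent v hbr.ne_start).not_ge (T.pre_le_of_anc (hbr.anc_of_dom T h))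
  exact hpar (hbr.dom_of_reflTransGen
    (.single ⟨T.parent_edge v hbr.ne_start, fun e => hne e.1⟩) hbr.dom_self)

theorem delEdge_of_induced_anc (hbr : IsBridge G s u v) (T : DFSTree G s) (hvw : T.Anc v w)
    (h : Induced G (T.Anc w) a b) : DelEdge G u v a b := by
  refine ⟨h.1, fun e => ?_⟩
  have hvu : T.pre v ≤ T.pre (T.parent v) := by
    rw [hbr.parent_eq T, ← e.1]
    exact T.pre_le_of_anc (HAnc.trans hvw h.2.1)
  exact (T.pre_parent v hbr.ne_start).not_ge hvu

theorem dom_of_anc_of_anc (hbr : IsBridge G s u v) (T : DFSTree G s) (hx : Dom G s v x)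
    (hzx : T.Anc z x) (hvz : T.Anc v z) : Dom G s v z := by
  rw [hbr.dom_iff] at hx ⊢
  exact fun hz => hx (hz.trans (ReflTransGen.mono
    (fun _ _ => hbr.delEdge_of_induced_anc T hvz) _ _ (T.reflTransGen_induced_anc hzx)))

theorem reflTransGen_delEdge_start (hG : StronglyConnected G) (hbr : IsBridge G s u v)
    (hnbr : ¬ IsBridge (Rev G) s v u) (x : V) : ReflTransGen (DelEdge G u v) x s := by
  have hu : ReflTransGen (DelEdge G u v) u s := by
    have h : ReflTransGen (DelEdge (Rev G) v u) s u := by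
      simpa [isBridge_iff, Rev, hbr.1] using hnbr
    rw [← reflTransGen_swap]
    exact ReflTransGen.mono (fun _ _ e => ⟨e.1, fun he => e.2 ⟨he.2, he.1⟩⟩) _ _ h
  induction reach_iff_reflTransGen.1 (hG x s) using ReflTransGen.head_induction_on with
  | refl => exact .refl
  | @head a c hac _ ih =>
    by_cases e : a = u ∧ c = v
    · exact e.1 ▸ hu
    · exact .head ⟨hac, e⟩ ih

theorem isSCC_not_dom (hG : StronglyConnected G) (hbr : IsBridge G s u v)
    (hnbr : ¬ IsBridge (Rev G) s v u) : IsSCC (DelEdge G u v) {y | ¬ Dom G s v y} := by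
  have hcls : {y | ¬ Dom G s v y} = {y | SConn (DelEdge G u v) s y} := by
    ext y
    change ¬ Dom G s v y ↔ SConn (DelEdge G u v) s y
    rw [hbr.dom_iff, not_not, sconn_iff_reflTransGen]
    exact (and_iff_left (hbr.reflTransGen_delEdge_start hG hnbr y)).symm
  exact hcls ▸ isSCC_setOf_sconn _ s

end IsBridge

section LoopNesting

variable {G : V → V → Prop} {s u v m w x w₁ w₂ : V} {T : DFSTree G s} {hp : V → V}

theorem sconn_loopParent (hbr : IsBridge G s u v) (hlp : IsLoopParent G s T.Anc hp)
    (hx : Dom G s v x) (hpx : Dom G s v (hp x)) : SConn (DelEdge G u v) x (hp x) := by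
  obtain ⟨hanc, -, hloop, -⟩ := hlp.2 x fun h => hbr.not_dom_start (h ▸ hx)
  have hsub : ∀ a b, Induced G (T.Anc (hp x)) a b → DelEdge G u v a b := fun _ _ =>
    hbr.delEdge_of_induced_anc T (hbr.anc_of_dom T hpx)
  exact sconn_iff_reflTransGen.2 ⟨ReflTransGen.mono hsub _ _ (inLoop_iff.1 hloop).2,
    ReflTransGen.mono hsub _ _ (T.reflTransGen_induced_anc hanc)⟩

theorem exists_boundary_sconn (hbr : IsBridge G s u v) (hlp : IsLoopParent G s T.Anc hp)
    (hx : Dom G s v x) :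
    ∃ w, (Dom G s v w ∧ ¬ Dom G s v (hp w)) ∧ SConn (DelEdge G u v) x w := by
  revert hx
  refine induction_of_forall_hAnc (P := fun x => Dom G s v x →
    ∃ w, (Dom G s v w ∧ ¬ Dom G s v (hp w)) ∧ SConn (DelEdge G u v) x w)
    hlp.forall_hAnc_root (fun h => absurd h hbr.not_dom_start) (fun x _ ih hx => ?_) x
  by_cases hpx : Dom G s v (hp x)
  · obtain ⟨w, hw, hxw⟩ := ih hpx
    exact ⟨w, hw, (sconn_loopParent hbr hlp hx hpx).trans hxw⟩
  · exact ⟨x, ⟨hx, hpx⟩, .refl _ _⟩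

theorem eq_of_hAnc_boundary (hbr : IsBridge G s u v) (hlp : IsLoopParent G s T.Anc hp)
    (hm : Dom G s v m) (hw : Dom G s v w ∧ ¬ Dom G s v (hp w)) (h : HAnc hp m w) : w = m := by
  obtain ⟨_ | n, hn⟩ := h
  · exact hn
  · refine absurd (hbr.dom_of_anc_of_anc T hw.1 (hlp.anc_apply w) ?_) hw.2
    exact HAnc.trans (hbr.anc_of_dom T hm) (hlp.anc_of_hAnc ⟨n, hn⟩)

theorem exists_hAnc_of_sconn (hbr : IsBridge G s u v) (hlp : IsLoopParent G s T.Anc hp)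
    (hx : Dom G s v x) :
    ∃ m, Dom G s v m ∧ ∀ y, SConn (DelEdge G u v) x y → HAnc hp m y := by
  set S := {y | SConn (DelEdge G u v) x y}
  obtain ⟨m, hmS, hmin⟩ := (measure T.pre).wf.has_min S ⟨x, .refl _ _⟩
  have hpath : ∀ a ∈ S, ∀ b ∈ S, ReflTransGen (Induced G (· ∈ S)) a b := by
    intro a ha b hb
    refine ReflTransGen.mono (fun _ _ e => ⟨e.1.1, e.2⟩) _ _ (reflTransGen_induced ?_
      (sconn_iff_reflTransGen.1 (ha.symm.trans hb)).1)
    exact fun z haz hzb => sconn_iff_reflTransGen.2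
      ⟨(sconn_iff_reflTransGen.1 ha).1.trans haz, hzb.trans (sconn_iff_reflTransGen.1 hb).2⟩
  have hanc : ∀ y ∈ S, T.Anc m y := fun y hy =>
    T.anc_of_reflTransGen_induced_pre (HAnc.refl _ m) (ReflTransGen.mono
      (fun _ _ e => ⟨e.1, not_lt.1 (hmin _ e.2.1), not_lt.1 (hmin _ e.2.2)⟩) _ _ (hpath m hmS y hy))
  refine ⟨m, hbr.dom_of_reflTransGen (sconn_iff_reflTransGen.1 hmS).2 hx, fun y hy => ?_⟩
  exact hlp.hAnc_of_reflTransGen (hanc y hy) (ReflTransGen.mono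
    (fun _ _ e => ⟨e.1, hanc _ e.2.1, hanc _ e.2.2⟩) _ _ (hpath y hy m hmS))

theorem eq_of_sconn_boundary (hbr : IsBridge G s u v) (hlp : IsLoopParent G s T.Anc hp)
    (hw₁ : Dom G s v w₁ ∧ ¬ Dom G s v (hp w₁)) (hw₂ : Dom G s v w₂ ∧ ¬ Dom G s v (hp w₂))
    (h : SConn (DelEdge G u v) w₁ w₂) : w₁ = w₂ := by
  obtain ⟨m, hm, hsub⟩ := exists_hAnc_of_sconn hbr hlp hw₁.1
  rw [eq_of_hAnc_boundary hbr hlp hm hw₁ (hsub w₁ (.refl _ _)),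
    eq_of_hAnc_boundary hbr hlp hm hw₂ (hsub w₂ h)]

end LoopNesting

theorem stmt9_general [Fintype V] (G : V → V → Prop) (hG : StronglyConnected G) (s u v : V)
    (hbr : IsBridge G s u v) (hnbr : ¬ IsBridge (Rev G) s v u)
    (T : DFSTree G s) (hp : V → V) (hlp : IsLoopParent G s T.Anc hp) :
    {C : Set V | IsSCC (DelEdge G u v) C}.ncard
      = {w | Dom G s v w ∧ ¬ Dom G s v (hp w)}.ncard + 1 :=
  ncard_setOf_isSCC (hbr.isSCC_not_dom hG hnbr) (fun _ hw => not_not.2 hw.1)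
    (fun _ hx => exists_boundary_sconn hbr hlp (not_not.1 hx))
    (fun _ h₁ _ h₂ => eq_of_sconn_boundary hbr hlp h₁ h₂)

/-- If `(u,v)` is a strong bridge that is a bridge of `G_s` but not of `G_s^R`, the
number of strongly connected components of `G \ (u,v)` equals the number of vertices
`w ∈ D(v)` with `h(w) ∉ D(v)`, plus one. -/
theorem stmt9 [Fintype V] (G : V → V → Prop) (hG : StronglyConnected G) (s u v : V)
    (hsb : IsStrongBridge G u v)
    (hbr : IsBridge G s u v) (hnbr : ¬ IsBridge (Rev G) s v u)
    (T : DFSTree G s) (hp : V → V) (hlp : IsLoopParent G s T.Anc hp) :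
    {C : Set V | IsSCC (DelEdge G u v) C}.ncard
      = {w | Dom G s v w ∧ ¬ Dom G s v (hp w)}.ncard + 1 :=
  stmt9_general G hG s u v hbr hnbr T hp hlp

end StrongConn
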